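/- Let I=(p_t)_{t∈[n]} be an instance and Î=(p̂_t)_{t∈[n]} a prediction such that the underpredicted instance U(I,Î) has at least one time t with min{p_t,p̂_t} > 0. Then |opt(I) − opt(Î)| ≤ η(I,Î); that is, the prediction error η satisfies Lipschitzness. -/

import Mathlib

open Finset

/-- Waiting time from `t` until the first acknowledgment in `X` at or after `t` (`0` if none). -/
noncomputable def ackWait (X : Finset ℕ) (t : ℕ) : ℕ :=
  if h : (X.filter fun x => t ≤ x).Nonempty then (X.filter fun x => t ≤ x).min' h - t else 0

/-- Delay cost `D(I,X)` of solution `X` for the instance `p` on horizon `{a, …, b}`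
with delay parameter `d`. -/
noncomputable def delayCost (d : ℝ) (a b : ℕ) (p : ℕ → ℝ) (X : Finset ℕ) : ℝ :=
  (1 / d) * ∑ t ∈ Finset.Icc a b, p t * (ackWait X t : ℝ)

/-- Total cost `F(I,X) = |X| + D(I,X)`. -/
noncomputable def cost (d : ℝ) (a b : ℕ) (p : ℕ → ℝ) (X : Finset ℕ) : ℝ :=
  (X.card : ℝ) + delayCost d a b p X

/-- Feasibility of `X` for the instance `p` on horizon `{a,…,b}`: `X` is a nonempty subset of
the horizon and every time with positive demand has an acknowledgment at or after it. -/
def Feasible (a b : ℕ) (p : ℕ → ℝ) (X : Finset ℕ) : Prop :=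
  X.Nonempty ∧ X ⊆ Finset.Icc a b ∧ ∀ t ∈ Finset.Icc a b, 0 < p t → ∃ x ∈ X, t ≤ x

/-- Optimal cost `opt(I)` of the instance `p` on horizon `{a,…,b}`. -/
noncomputable def opt (d : ℝ) (a b : ℕ) (p : ℕ → ℝ) : ℝ :=
  sInf {c : ℝ | ∃ X : Finset ℕ, Feasible a b p X ∧ cost d a b p X = c}

/-- `Δ(I,Y,t) = D(I,Y) − D(I,Y ∪ {t})`. -/
noncomputable def delta (d : ℝ) (a b : ℕ) (p : ℕ → ℝ) (Y : Finset ℕ) (t : ℕ) : ℝ :=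
  delayCost d a b p Y - delayCost d a b p (insert t Y)

/-- Auxiliary error `τ([t1,t2], I, Î) = opt(O(I⟨t1,t2⟩,Î⟨t1,t2⟩)) − opt(U(I⟨t1,t2⟩,Î⟨t1,t2⟩))`. -/
noncomputable def auxErr (d : ℝ) (t1 t2 : ℕ) (p q : ℕ → ℝ) : ℝ :=
  opt d t1 t2 (fun t => max (p t) (q t)) - opt d t1 t2 (fun t => min (p t) (q t))

/-- The prediction error `η(I,Î)`: the supremum, over all partitions of `[n]` into consecutive
intervals that are non-empty for the underpredicted instance `U(I,Î)`, of the sum of auxiliary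
errors of the intervals. -/
noncomputable def etaErr (d : ℝ) (n : ℕ) (p q : ℕ → ℝ) : ℝ :=
  sSup {s : ℝ | ∃ (m : ℕ) (l : ℕ → ℕ), 0 < m ∧ l 0 = 0 ∧ l m = n ∧
    (∀ i < m, l i < l (i + 1)) ∧
    (∀ i < m, ∃ t ∈ Finset.Icc (l i + 1) (l (i + 1)), 0 < min (p t) (q t)) ∧
    s = ∑ i ∈ Finset.range m, auxErr d (l i + 1) (l (i + 1)) p q}


/-
Lowering demands only enlarges the feasible set and lowers every cost, so `opt` is monotone in the
demands. Hence `opt(U) ≤ opt(I), opt(Î) ≤ opt(O)` on `[1, n]`, i.e. `|opt(I) − opt(Î)|` is at most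
the auxiliary error of the one-interval partition `{[1, n]}`, which is admissible because `U` has a
positive demand. The supremum defining `η` is a genuine one: the auxiliary error of an interval is
at most its length (acknowledge at every time of it), so every partition sum is at most `n`.
-/

section Cost

variable {d : ℝ} {a b : ℕ} {p p' : ℕ → ℝ}

lemma ackWait_eq_zero_of_mem {X : Finset ℕ} {t : ℕ} (h : t ∈ X) : ackWait X t = 0 := by
  have ht : t ∈ X.filter (t ≤ ·) := mem_filter.mpr ⟨h, le_rfl⟩
  rw [ackWait, dif_pos ⟨t, ht⟩]
  exact Nat.sub_eq_zero_of_le (min'_le _ t ht)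

lemma delayCost_nonneg (hd : 0 ≤ d) (hp : ∀ t, 0 ≤ p t) (X : Finset ℕ) :
    0 ≤ delayCost d a b p X :=
  mul_nonneg (by positivity) (sum_nonneg fun t _ => mul_nonneg (hp t) (Nat.cast_nonneg _))

lemma delayCost_mono (hd : 0 ≤ d) (h : ∀ t, p t ≤ p' t) (X : Finset ℕ) :
    delayCost d a b p X ≤ delayCost d a b p' X :=
  mul_le_mul_of_nonneg_left
    (sum_le_sum fun t _ => mul_le_mul_of_nonneg_right (h t) (Nat.cast_nonneg _)) (by positivity)

lemma cost_Icc : cost d a b p (Icc a b) = (b + 1 - a : ℕ) := by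
  rw [cost, delayCost, sum_eq_zero fun t ht => by rw [ackWait_eq_zero_of_mem ht, Nat.cast_zero,
    mul_zero], mul_zero, add_zero, Nat.card_Icc]

end Cost

section Opt

variable {d : ℝ} {a b : ℕ} {p p' : ℕ → ℝ}

lemma feasible_Icc (hab : a ≤ b) (p : ℕ → ℝ) : Feasible a b p (Icc a b) :=
  ⟨nonempty_Icc.mpr hab, Subset.rfl, fun t ht _ => ⟨t, ht, le_rfl⟩⟩

lemma Feasible.of_le {X : Finset ℕ} (hX : Feasible a b p' X) (h : ∀ t, p t ≤ p' t) :
    Feasible a b p X :=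
  ⟨hX.1, hX.2.1, fun t ht hpt => hX.2.2 t ht (hpt.trans_le (h t))⟩

lemma finite_feasible_costs :
    {c : ℝ | ∃ X : Finset ℕ, Feasible a b p X ∧ cost d a b p X = c}.Finite := by
  refine ((Icc a b).powerset.image (cost d a b p)).finite_toSet.subset ?_
  rintro c ⟨X, hX, rfl⟩
  exact mem_image_of_mem _ (mem_powerset.mpr hX.2.1)

lemma opt_le_cost {X : Finset ℕ} (hX : Feasible a b p X) : opt d a b p ≤ cost d a b p X :=
  csInf_le finite_feasible_costs.bddBelow ⟨X, hX, rfl⟩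

lemma opt_le_card (hab : a ≤ b) : opt d a b p ≤ (b + 1 - a : ℕ) :=
  cost_Icc (d := d) (p := p) ▸ opt_le_cost (feasible_Icc hab p)

lemma opt_nonneg (hd : 0 ≤ d) (hp : ∀ t, 0 ≤ p t) : 0 ≤ opt d a b p := by
  refine Real.sInf_nonneg ?_
  rintro c ⟨X, -, rfl⟩
  exact add_nonneg (Nat.cast_nonneg _) (delayCost_nonneg hd hp X)

lemma opt_mono (hd : 0 ≤ d) (hab : a ≤ b) (h : ∀ t, p t ≤ p' t) :
    opt d a b p ≤ opt d a b p' := by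
  refine le_csInf ⟨_, Icc a b, feasible_Icc hab p', rfl⟩ ?_
  rintro c ⟨X, hX, rfl⟩
  exact (opt_le_cost (hX.of_le h)).trans (add_le_add_right (delayCost_mono hd h X) _)

end Opt

section AuxErr

variable {d : ℝ} {p q : ℕ → ℝ}

lemma abs_opt_sub_le_auxErr (hd : 0 ≤ d) {a b : ℕ} (hab : a ≤ b) :
    |opt d a b p - opt d a b q| ≤ auxErr d a b p q := by
  have hU_p := opt_mono hd hab (p := fun t => min (p t) (q t)) fun t => min_le_left _ _
  have hU_q := opt_mono hd hab (p := fun t => min (p t) (q t)) fun t => min_le_right _ _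
  have hO_p := opt_mono hd hab (p' := fun t => max (p t) (q t)) fun t => le_max_left (p t) _
  have hO_q := opt_mono hd hab (p' := fun t => max (p t) (q t)) fun t => le_max_right _ (q t)
  rw [abs_sub_le_iff, auxErr]
  constructor <;> linarith

lemma auxErr_succ_le (hd : 0 ≤ d) (hp : ∀ t, 0 ≤ p t) (hq : ∀ t, 0 ≤ q t) {a b : ℕ}
    (hab : a < b) : auxErr d (a + 1) b p q ≤ (b : ℝ) - a := by
  have hO := opt_le_card (d := d) (p := fun t => max (p t) (q t)) hab
  have hU := opt_nonneg (a := a + 1) (b := b) hd fun t => le_min (hp t) (hq t)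
  rw [show b + 1 - (a + 1) = b - a by omega, Nat.cast_sub hab.le] at hO
  rw [auxErr]
  linarith

lemma sum_auxErr_le (hd : 0 ≤ d) (hp : ∀ t, 0 ≤ p t) (hq : ∀ t, 0 ≤ q t) {m : ℕ}
    {l : ℕ → ℕ} (hl : ∀ i < m, l i < l (i + 1)) :
    ∑ i ∈ range m, auxErr d (l i + 1) (l (i + 1)) p q ≤ (l m : ℝ) - l 0 :=
  (sum_le_sum fun i hi => auxErr_succ_le hd hp hq (hl i (mem_range.mp hi))).trans_eq
    (sum_range_sub (fun i => (l i : ℝ)) m)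

lemma auxErr_le_etaErr (hd : 0 ≤ d) (hp : ∀ t, 0 ≤ p t) (hq : ∀ t, 0 ≤ q t) {n : ℕ}
    (hne : ∃ t ∈ Icc 1 n, 0 < min (p t) (q t)) : auxErr d 1 n p q ≤ etaErr d n p q := by
  obtain ⟨t, ht, hpos⟩ := hne
  have hn : 0 < n := Nat.lt_of_lt_of_le (mem_Icc.mp ht).1 (mem_Icc.mp ht).2
  refine le_csSup ⟨n, ?_⟩ ⟨1, (n * ·), one_pos, by simp, by simp, ?_, ?_, by simp⟩
  · rintro s ⟨m, l, -, hl0, hlm, hl, -, rfl⟩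
    simpa [hl0, hlm] using sum_auxErr_le hd hp hq hl
  · simpa using hn
  · intro i hi
    obtain rfl : i = 0 := Nat.lt_one_iff.mp hi
    exact ⟨t, by simpa using ht, hpos⟩

end AuxErr

/-- if the underpredicted instance has at least one time with positive demand,
then `|opt(I) − opt(Î)| ≤ η(I,Î)` (Lipschitzness of `η`). -/
theorem etaErr_lipschitz (d : ℝ) (hd : 0 < d) (n : ℕ) (p q : ℕ → ℝ)
    (hp : ∀ t, 0 ≤ p t) (hq : ∀ t, 0 ≤ q t)
    (hne : ∃ t ∈ Finset.Icc 1 n, 0 < min (p t) (q t)) :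
    |opt d 1 n p - opt d 1 n q| ≤ etaErr d n p q := by
  have hn : 1 ≤ n := by
    obtain ⟨t, ht, -⟩ := hne
    exact (mem_Icc.mp ht).1.trans (mem_Icc.mp ht).2
  exact (abs_opt_sub_le_auxErr hd.le hn).trans (auxErr_le_etaErr hd.le hp hq hne)
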